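/- For a fixed dataset S_m, a prior P on ℝ^d satisfying a log-Sobolev inequality with constant c_LS, a nonnegative loss with empirical risk R̂ := (1/m)Σᵢℓ(·,zᵢ) such that ℓ(·,z) ∈ H¹(P) for all z, and any γ > 0, the Gibbs posterior Q_γ with density dQ_γ(h) ∝ exp(−γR̂(h))dP(h) satisfies KL(Q_γ, P) ≤ (γ²c_LS/4) · E_{h∼Q_γ}[‖∇_h R̂(h)‖²]. -/

import Mathlib

open MeasureTheory

/-- Membership in the Sobolev space `H¹(P)`. -/
def MemH1 {d : ℕ} (P : Measure (EuclideanSpace ℝ (Fin d)))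
    (f : EuclideanSpace ℝ (Fin d) → ℝ) : Prop :=
  Differentiable ℝ f ∧ MemLp f 2 P ∧ MemLp (fun h => ‖gradient f h‖) 2 P

/-- Kullback–Leibler divergence `KL(Q, P) = ∫ log (dQ/dP) dQ`. -/
noncomputable def klDiv {d : ℕ} (Q P : Measure (EuclideanSpace ℝ (Fin d))) : ℝ :=
  ∫ h, Real.log (Q.rnDeriv P h).toReal ∂Q

/-!
Apply the log-Sobolev inequality to the square root of the Gibbs density,
`f = exp (-γ R̂ / 2) / √Z` with `Z = ∫ exp (-γ R̂) dP`. Then `∫ f² dP = 1` and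
`Ent_P(f²) = KL(Q_γ, P)`, while `‖∇f‖² = (γ² / 4) f² ‖∇R̂‖²`, so the Dirichlet energy of `f`
is `(γ² / 4) E_{Q_γ} ‖∇R̂‖²`. Since `R̂ ≥ 0` and `γ ≥ 0`, `f` is bounded and `‖∇f‖ ≤ C ‖∇R̂‖`,
which puts `f` in `H¹(P)`.
-/

open Real InnerProductSpace

theorem norm_fderiv_const_mul_exp_mul {E : Type*} [NormedAddCommGroup E] [NormedSpace ℝ E]
    {R : E → ℝ} {x : E} (hR : DifferentiableAt ℝ R x) (c a : ℝ) :
    ‖fderiv ℝ (fun y => c * exp (a * R y)) x‖ = |c * exp (a * R x)| * |a| * ‖fderiv ℝ R x‖ := by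
  rw [((hR.hasFDerivAt.const_mul a).exp.const_mul c).fderiv]
  simp only [norm_smul, Real.norm_eq_abs, abs_mul]
  ring

section Gradient

variable {E : Type*} [NormedAddCommGroup E] [InnerProductSpace ℝ E] [CompleteSpace E]

theorem norm_gradient (f : E → ℝ) (x : E) : ‖gradient f x‖ = ‖fderiv ℝ f x‖ :=
  (toDual ℝ E).symm.norm_map _

theorem measurable_norm_gradient [MeasurableSpace E] [OpensMeasurableSpace E] (f : E → ℝ) :
    Measurable fun x => ‖gradient f x‖ := by
  simp only [norm_gradient]
  exact (measurable_fderiv ℝ f).norm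

end Gradient

section Sobolev

variable {d : ℕ} {P : Measure (EuclideanSpace ℝ (Fin d))}

theorem MemH1.add {f g : EuclideanSpace ℝ (Fin d) → ℝ} (hf : MemH1 P f) (hg : MemH1 P g) :
    MemH1 P (f + g) := by
  refine ⟨hf.1.add hg.1, hf.2.1.add hg.2.1, ?_⟩
  refine (hf.2.2.add hg.2.2).of_le (measurable_norm_gradient _).aestronglyMeasurable
    (ae_of_all _ fun x => ?_)
  simp only [Pi.add_apply, norm_norm, norm_gradient, fderiv_add (hf.1 x) (hg.1 x)]
  exact (norm_add_le _ _).trans (le_abs_self _)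

theorem MemH1.const_mul {f : EuclideanSpace ℝ (Fin d) → ℝ} (hf : MemH1 P f) (c : ℝ) :
    MemH1 P fun x => c * f x := by
  refine ⟨hf.1.const_mul c, hf.2.1.const_mul c, ?_⟩
  convert hf.2.2.const_mul |c| using 2 with x
  simp only [norm_gradient, fderiv_const_mul (hf.1 x), norm_smul, Real.norm_eq_abs]

theorem memH1_zero : MemH1 P 0 :=
  ⟨differentiable_const 0, MemLp.zero, by
    simpa only [Pi.zero_def, gradient_fun_const, norm_zero] using MemLp.zero⟩

theorem MemH1.sum {ι : Type*} {s : Finset ι} {f : ι → EuclideanSpace ℝ (Fin d) → ℝ}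
    (hf : ∀ i ∈ s, MemH1 P (f i)) : MemH1 P fun x => ∑ i ∈ s, f i x := by
  classical
  induction s using Finset.induction_on with
  | empty => exact memH1_zero
  | insert i s hi ih =>
    simp only [Finset.sum_insert hi]
    exact (hf i (Finset.mem_insert_self i s)).add
      (ih fun j hj => hf j (Finset.mem_insert_of_mem hj))

end Sobolev


theorem exp_neg_mul_le_one {t r : ℝ} (ht : 0 ≤ t) (hr : 0 ≤ r) : exp (-t * r) ≤ 1 :=
  exp_le_one_iff.2 (by nlinarith)

section Gibbs

variable {α : Type*} [MeasurableSpace α] {μ : Measure α}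

theorem integral_withDensity_ofReal {g : α → ℝ} (hg : Measurable g) (hg0 : ∀ x, 0 ≤ g x)
    (φ : α → ℝ) :
    ∫ x, φ x ∂μ.withDensity (fun x => ENNReal.ofReal (g x)) = ∫ x, g x * φ x ∂μ := by
  rw [integral_withDensity_eq_integral_toReal_smul hg.ennreal_ofReal
    (ae_of_all _ fun _ => ENNReal.ofReal_lt_top)]
  simp only [ENNReal.toReal_ofReal (hg0 _), smul_eq_mul]

theorem integrable_exp_neg_mul [IsFiniteMeasure μ] {R : α → ℝ} (hR : Measurable R)
    (hR0 : ∀ x, 0 ≤ R x) {γ : ℝ} (hγ : 0 ≤ γ) : Integrable (fun x => exp (-γ * R x)) μ :=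
  (integrable_const 1).mono' (hR.const_mul _).exp.aestronglyMeasurable
    (ae_of_all _ fun x => by
      rw [norm_of_nonneg (exp_pos _).le]
      exact exp_neg_mul_le_one hγ (hR0 x))

noncomputable def gibbsDensity (μ : Measure α) (R : α → ℝ) (γ : ℝ) (x : α) : ℝ :=
  exp (-γ * R x) / ∫ y, exp (-γ * R y) ∂μ

noncomputable def gibbsMeasure (μ : Measure α) (R : α → ℝ) (γ : ℝ) : Measure α :=
  μ.withDensity fun x => ENNReal.ofReal (gibbsDensity μ R γ x)

theorem gibbsDensity_nonneg (R : α → ℝ) (γ : ℝ) (x : α) : 0 ≤ gibbsDensity μ R γ x :=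
  div_nonneg (exp_pos _).le (integral_nonneg fun _ => (exp_pos _).le)

theorem measurable_gibbsDensity {R : α → ℝ} (hR : Measurable R) (γ : ℝ) :
    Measurable (gibbsDensity μ R γ) :=
  (hR.const_mul _).exp.div_const _

theorem integral_gibbsDensity [IsProbabilityMeasure μ] {R : α → ℝ} (hR : Measurable R)
    (hR0 : ∀ x, 0 ≤ R x) {γ : ℝ} (hγ : 0 ≤ γ) : ∫ x, gibbsDensity μ R γ x ∂μ = 1 := by
  simp only [gibbsDensity, integral_div]
  exact div_self (integral_exp_pos (integrable_exp_neg_mul hR hR0 hγ)).ne'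

theorem integral_gibbsMeasure {R : α → ℝ} (hR : Measurable R) (γ : ℝ) (φ : α → ℝ) :
    ∫ x, φ x ∂gibbsMeasure μ R γ = ∫ x, gibbsDensity μ R γ x * φ x ∂μ :=
  integral_withDensity_ofReal (measurable_gibbsDensity hR γ) (gibbsDensity_nonneg R γ) φ

end Gibbs

def LogSobolevInequality {d : ℕ} (P : Measure (EuclideanSpace ℝ (Fin d))) (cLS : ℝ) : Prop :=
  ∀ f : EuclideanSpace ℝ (Fin d) → ℝ, MemH1 P f →
    ∫ h, (f h) ^ 2 * Real.log ((f h) ^ 2 / ∫ h', (f h') ^ 2 ∂P) ∂P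
      ≤ cLS * ∫ h, ‖gradient f h‖ ^ 2 ∂P

section LogSobolev

variable {d : ℕ} {P : Measure (EuclideanSpace ℝ (Fin d))}

theorem klDiv_withDensity_ofReal [SigmaFinite P] {g : EuclideanSpace ℝ (Fin d) → ℝ}
    (hg : Measurable g) (hg0 : ∀ x, 0 ≤ g x) :
    klDiv (P.withDensity fun x => ENNReal.ofReal (g x)) P = ∫ x, g x * log (g x) ∂P := by
  have hrn := Measure.rnDeriv_withDensity P hg.ennreal_ofReal
  rw [klDiv, integral_congr_ae (g := fun x => log (g x)), integral_withDensity_ofReal hg hg0]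
  filter_upwards [(withDensity_absolutelyContinuous P _).ae_le hrn] with x hx
  rw [hx, ENNReal.toReal_ofReal (hg0 x)]

theorem memH1_const_mul_exp_neg_mul [IsFiniteMeasure P] {R : EuclideanSpace ℝ (Fin d) → ℝ}
    (hR : MemH1 P R) (hR0 : ∀ x, 0 ≤ R x) {t : ℝ} (ht : 0 ≤ t) (c : ℝ) :
    MemH1 P fun x => c * exp (-t * R x) := by
  have hexp_le (x) : exp (-t * R x) ≤ 1 := exp_neg_mul_le_one ht (hR0 x)
  refine ⟨((hR.1.const_mul _).exp).const_mul c, ?_, ?_⟩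
  · refine MemLp.of_bound ((hR.1.continuous.measurable.const_mul _).exp.const_mul c
      ).aestronglyMeasurable |c| (ae_of_all _ fun x => ?_)
    rw [norm_mul, norm_of_nonneg (exp_pos _).le]
    exact mul_le_of_le_one_right (norm_nonneg c) (hexp_le x)
  · refine (hR.2.2.const_mul (|c| * t)).of_le (measurable_norm_gradient _).aestronglyMeasurable
      (ae_of_all _ fun x => ?_)
    rw [norm_norm, norm_gradient, norm_fderiv_const_mul_exp_mul (hR.1 x), ← norm_gradient,
      norm_mul, norm_mul, norm_norm, abs_mul, abs_of_pos (exp_pos _), abs_neg, abs_of_nonneg ht,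
      Real.norm_eq_abs, Real.norm_eq_abs, abs_abs, abs_of_nonneg ht]
    gcongr
    exact mul_le_of_le_one_right (abs_nonneg c) (hexp_le x)

theorem klDiv_gibbsMeasure_le [IsProbabilityMeasure P] {cLS : ℝ} (hLS : LogSobolevInequality P cLS)
    {R : EuclideanSpace ℝ (Fin d) → ℝ} (hR : MemH1 P R) (hR0 : ∀ x, 0 ≤ R x) {γ : ℝ}
    (hγ : 0 ≤ γ) :
    klDiv (gibbsMeasure P R γ) P
      ≤ (γ ^ 2 * cLS / 4) * ∫ x, ‖gradient R x‖ ^ 2 ∂gibbsMeasure P R γ := by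
  have hRm : Measurable R := hR.1.continuous.measurable
  set Z := ∫ y, exp (-γ * R y) ∂P
  have hZ : 0 < Z := integral_exp_pos (integrable_exp_neg_mul hRm hR0 hγ)
  set f := fun x => (√Z)⁻¹ * exp (-(γ / 2) * R x) with hf
  have hf_sq (x) : f x ^ 2 = gibbsDensity P R γ x := by
    simp only [hf, gibbsDensity, mul_pow, inv_pow, sq_sqrt hZ.le, ← exp_nat_mul, div_eq_inv_mul]
    congr 2
    push_cast
    ring
  have hf_grad (x) :
      ‖gradient f x‖ ^ 2 = gibbsDensity P R γ x * (γ ^ 2 / 4 * ‖gradient R x‖ ^ 2) := by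
    rw [norm_gradient, norm_fderiv_const_mul_exp_mul (hR.1 x), ← norm_gradient, mul_pow, mul_pow,
      sq_abs, sq_abs, ← hf_sq]
    ring
  have hLSf := hLS f (memH1_const_mul_exp_neg_mul hR hR0 (by positivity) _)
  simp only [hf_sq, integral_gibbsDensity hRm hR0 hγ, div_one, hf_grad] at hLSf
  calc klDiv (gibbsMeasure P R γ) P = ∫ x, gibbsDensity P R γ x * log (gibbsDensity P R γ x) ∂P :=
        klDiv_withDensity_ofReal (measurable_gibbsDensity hRm γ) (gibbsDensity_nonneg R γ)
    _ ≤ cLS * ∫ x, gibbsDensity P R γ x * (γ ^ 2 / 4 * ‖gradient R x‖ ^ 2) ∂P := hLSf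
    _ = (γ ^ 2 * cLS / 4) * ∫ x, ‖gradient R x‖ ^ 2 ∂gibbsMeasure P R γ := by
      rw [integral_gibbsMeasure hRm, ← integral_const_mul, ← integral_const_mul]
      congr 1 with x
      ring

end LogSobolev

theorem gibbs_kl_le_gradient_norm_general
    {d : ℕ} {Z : Type*}
    (P : Measure (EuclideanSpace ℝ (Fin d))) [IsProbabilityMeasure P]
    (cLS : ℝ)
    (hLS : ∀ f : EuclideanSpace ℝ (Fin d) → ℝ, MemH1 P f →
      ∫ h, (f h) ^ 2 * Real.log ((f h) ^ 2 / ∫ h', (f h') ^ 2 ∂P) ∂P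
        ≤ cLS * ∫ h, ‖gradient f h‖ ^ 2 ∂P)
    (m : ℕ) (z : Fin m → Z)
    (ℓ : EuclideanSpace ℝ (Fin d) → Z → ℝ)
    (hnonneg : ∀ h z', 0 ≤ ℓ h z')
    (hH1 : ∀ z', MemH1 P (fun h => ℓ h z'))
    (Rhat : EuclideanSpace ℝ (Fin d) → ℝ)
    (hRhat : Rhat = fun h => (1 / (m : ℝ)) * ∑ i, ℓ h (z i))
    (γ : ℝ) (hγ : 0 < γ)
    (Qγ : Measure (EuclideanSpace ℝ (Fin d)))
    (hQγ : Qγ = P.withDensity fun h =>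
      ENNReal.ofReal (Real.exp (-γ * Rhat h) / ∫ h', Real.exp (-γ * Rhat h') ∂P)) :
    klDiv Qγ P ≤ (γ ^ 2 * cLS / 4) * ∫ h, ‖gradient Rhat h‖ ^ 2 ∂Qγ := by
  have hR : MemH1 P Rhat := hRhat ▸ (MemH1.sum fun i _ => hH1 (z i)).const_mul _
  have hR0 (h) : 0 ≤ Rhat h := by
    rw [hRhat]
    exact mul_nonneg (by positivity) (Finset.sum_nonneg fun i _ => hnonneg h (z i))
  subst hQγ
  exact klDiv_gibbsMeasure_le hLS hR hR0 hγ.le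

/-- the Gibbs posterior `Q_γ ∝ exp(−γ R̂) P` of a log-Sobolev prior `P`
satisfies `KL(Q_γ, P) ≤ (γ² c_LS / 4) E_{Q_γ}[‖∇R̂‖²]`. -/
theorem gibbs_kl_le_gradient_norm
    {d : ℕ} {Z : Type*} [MeasurableSpace Z]
    (P : Measure (EuclideanSpace ℝ (Fin d))) [IsProbabilityMeasure P]
    (cLS : ℝ) (hcLS : 0 < cLS)
    (hLS : ∀ f : EuclideanSpace ℝ (Fin d) → ℝ, MemH1 P f →
      ∫ h, (f h) ^ 2 * Real.log ((f h) ^ 2 / ∫ h', (f h') ^ 2 ∂P) ∂P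
        ≤ cLS * ∫ h, ‖gradient f h‖ ^ 2 ∂P)
    (m : ℕ) (hm : 0 < m) (z : Fin m → Z)
    (ℓ : EuclideanSpace ℝ (Fin d) → Z → ℝ)
    (hnonneg : ∀ h z', 0 ≤ ℓ h z')
    (hH1 : ∀ z', MemH1 P (fun h => ℓ h z'))
    (Rhat : EuclideanSpace ℝ (Fin d) → ℝ)
    (hRhat : Rhat = fun h => (1 / (m : ℝ)) * ∑ i, ℓ h (z i))
    (γ : ℝ) (hγ : 0 < γ)
    (Qγ : Measure (EuclideanSpace ℝ (Fin d)))
    (hQγ : Qγ = P.withDensity fun h =>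
      ENNReal.ofReal (Real.exp (-γ * Rhat h) / ∫ h', Real.exp (-γ * Rhat h') ∂P)) :
    klDiv Qγ P ≤ (γ ^ 2 * cLS / 4) * ∫ h, ‖gradient Rhat h‖ ^ 2 ∂Qγ :=
  gibbs_kl_le_gradient_norm_general P cLS hLS m z ℓ hnonneg hH1 Rhat hRhat γ hγ Qγ hQγ
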